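/- Let (S, H, σ, f) be a c-groupoid, x ∈ S, a ∈ H. Then for all m, n ≥ 1: (β^m(x,a)θg^n(x,a))∘β^n(x,a) = (β^n(x,a)θg^m(x,a))∘β^m(x,a) = β^{m+n}(x,a). -/
import Mathlib


/-- A c-groupoid `(S, H, σ, f)`: a groupoid `S` with identity `e`, a group `H`
acting on `S` on the right via `θ`, a map `σ : S → H → H` and a map
`f : S → S → H` satisfying axioms (1)–(9). -/
structure CGroupoid (S : Type*) (H : Type*) [Group H] where
  op : S → S → S
  e : S
  θ : S → H → S
  σ : S → H → H
  f : S → S → H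
  op_idr : ∀ x, op x e = x
  op_idl : ∀ x, op e x = x
  θ_one : ∀ x, θ x 1 = x
  θ_mul : ∀ x h₁ h₂, θ x (h₁ * h₂) = θ (θ x h₁) h₂
  ax1 : ∀ x y, op x y = y → x = e
  ax2 : ∀ x, ∃ x', op x' x = e
  ax3 : ∀ h, σ e h = h
  ax4r : ∀ x, f x e = 1
  ax4l : ∀ x, f e x = 1
  ax5 : ∀ x h₁ h₂, σ x (h₁ * h₂) = σ x h₁ * σ (θ x h₁) h₂
  ax6 : ∀ x y z, op (op x y) z = op (θ x (f y z)) (op y z)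
  ax7 : ∀ x y h, θ (op x y) h = op (θ x (σ y h)) (θ y h)
  ax8 : ∀ x y z, f x y * f (op x y) z = σ x (f y z) * f (θ x (f y z)) (op y z)
  ax9 : ∀ x y h, f x y * σ (op x y) h = σ x (σ y h) * f (θ x (σ y h)) (θ y h)

namespace CGroupoid

variable {S H : Type*} [Group H]

/-- The multiplication `(a,x)·(b,y) = (aσ_x(b)f(xθb, y), (xθb)∘y)` on `G = H × S`. -/
def mul (C : CGroupoid S H) (p q : H × S) : H × S :=
  (p.1 * C.σ p.2 q.1 * C.f (C.θ p.2 q.1) q.2, C.op (C.θ p.2 q.1) q.2)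

/-- `β^n(x,a)`: `β¹(x,a) = x`, `β^{r+1}(x,a) = (β^r(x,a)θa)∘x`. -/
def beta (C : CGroupoid S H) (x : S) (a : H) : ℕ → S
  | 0 => C.e
  | 1 => x
  | n + 2 => C.op (C.θ (C.beta x a (n + 1)) a) x

/-- `g^n(x,a)`: `g¹(x,a) = a`,
`g^{n+1}(x,a) = g^n(x,a)·σ_{β^n(x,a)}(a)·f(β^n(x,a)θa, x)`. -/
def g (C : CGroupoid S H) (x : S) (a : H) : ℕ → H
  | 0 => 1
  | 1 => a
  | n + 2 => C.g x a (n + 1) * C.σ (C.beta x a (n + 1)) a *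
      C.f (C.θ (C.beta x a (n + 1)) a) x

/-- `n`-th power of an element of `G = H × S` under `C.mul`. -/
def pow (C : CGroupoid S H) (p : H × S) : ℕ → H × S
  | 0 => (1, C.e)
  | n + 1 => C.mul (C.pow p n) p

/-- `[aσ_x(a)]_n`: `[aσ_x(a)]_0 = a`, `[aσ_x(a)]_n = a·σ_x([aσ_x(a)]_{n-1})`. -/
def brk (C : CGroupoid S H) (x : S) (a : H) : ℕ → H
  | 0 => a
  | n + 1 => a * C.σ x (C.brk x a n)

variable (C : CGroupoid S H)

lemma theta_e (h : H) : C.θ C.e h = C.e := by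
  have h7 := C.ax7 C.e C.e h
  rw [C.op_idl, C.ax3] at h7
  exact C.ax1 _ _ h7.symm

lemma sigma_one (x : S) : C.σ x 1 = 1 := by
  have h5 := C.ax5 x 1 1
  rw [one_mul, C.θ_one] at h5
  exact left_eq_mul.mp h5

lemma mul_e_left (p : H × S) : C.mul (1, C.e) p = p := by
  obtain ⟨b, y⟩ := p
  simp [mul, C.theta_e, C.ax3, C.ax4l, C.op_idl]

lemma mul_e_right (p : H × S) : C.mul p (1, C.e) = p := by
  obtain ⟨b, y⟩ := p
  simp [mul, C.sigma_one, C.ax4r, C.θ_one, C.op_idr]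

lemma mul_assoc' (p q r : H × S) :
    C.mul (C.mul p q) r = C.mul p (C.mul q r) := by
  obtain ⟨a, x⟩ := p; obtain ⟨b, y⟩ := q; obtain ⟨c, z⟩ := r
  simp only [mul, Prod.mk.injEq]
  constructor
  · rw [C.ax7, mul_assoc (a * C.σ x b), C.ax9]
    simp only [mul_assoc]
    rw [C.ax8, C.ax5, C.ax5, C.θ_mul, C.θ_mul]
    simp only [mul_assoc]
  · rw [C.ax7, C.ax6, C.θ_mul, C.θ_mul]

lemma pow_eq (x : S) (a : H) : ∀ n, C.pow (a, x) n = (C.g x a n, C.beta x a n)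
  | 0 => rfl
  | 1 => by
      show C.mul (C.pow (a, x) 0) (a, x) = _
      rw [show C.pow (a, x) 0 = (1, C.e) from rfl, C.mul_e_left]
      rfl
  | n + 2 => by
      show C.mul (C.pow (a, x) (n + 1)) (a, x) = _
      rw [pow_eq x a (n + 1)]
      simp [mul, g, beta, mul_assoc]

lemma pow_add (p : H × S) (m : ℕ) : ∀ n, C.pow p (m + n) = C.mul (C.pow p m) (C.pow p n)
  | 0 => (C.mul_e_right _).symm
  | n + 1 => by
      show C.mul (C.pow p (m + n)) p = _
      rw [pow_add p m n, C.mul_assoc']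
      rfl

end CGroupoid

/-- For all `m, n ≥ 1`:
`(β^m(x,a)θg^n(x,a))∘β^n(x,a) = (β^n(x,a)θg^m(x,a))∘β^m(x,a) = β^{m+n}(x,a)`. -/
theorem cgroupoid_beta_add {S H : Type*} [Group H] (C : CGroupoid S H)
    (x : S) (a : H) : ∀ m n : ℕ, 1 ≤ m → 1 ≤ n →
      C.op (C.θ (C.beta x a m) (C.g x a n)) (C.beta x a n) =
        C.op (C.θ (C.beta x a n) (C.g x a m)) (C.beta x a m) ∧
      C.op (C.θ (C.beta x a m) (C.g x a n)) (C.beta x a n) =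
        C.beta x a (m + n) := by
  have key : ∀ m n : ℕ, C.mul (C.g x a m, C.beta x a m) (C.g x a n, C.beta x a n) =
      (C.g x a (m + n), C.beta x a (m + n)) := by
    intro m n
    rw [← C.pow_eq, ← C.pow_eq, ← C.pow_eq, ← C.pow_add]
  intro m n _ _
  have h1 := congrArg Prod.snd (key m n)
  have h2 := congrArg Prod.snd (key n m)
  simp only [CGroupoid.mul] at h1 h2
  rw [Nat.add_comm n m] at h2
  exact ⟨h1.trans h2.symm, h1⟩
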